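/- Language-theoretic characterization of join for finite traces: for LTSRs M1, M2 over name sets N1, N2, a finite string w ∈ Rec*_{N1∪N2}(D) is traceable in M1 ⋈ M2 if and only if vis(w↓_{N1}) is traceable in M1 and vis(w↓_{N2}) is traceable in M2. -/
import Mathlib


open scoped Classical

variable {Name Data : Type}

/-- Records over name type `Name` and data type `Data`: partial functions. -/
abbrev Rcd (Name Data : Type) := Name → Option Data

/-- The domain of a record. -/
def recDom (r : Rcd Name Data) : Set Name := {n | r n ≠ none}

/-- Restriction of a record to a name set. -/
noncomputable def recRestrict (r : Rcd Name Data) (N : Set Name) : Rcd Name Data :=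
  fun n => if n ∈ N then r n else none

/-- Compatibility of records `r1 ∈ Rec_{N1}(D)` and `r2 ∈ Rec_{N2}(D)`. -/
def recComp (N1 N2 : Set Name) (r1 r2 : Rcd Name Data) : Prop :=
  recDom r1 ∩ N2 = recDom r2 ∩ N1 ∧
    ∀ n ∈ recDom r1 ∩ recDom r2, r1 n = r2 n

/-- Union of records: takes `r1`'s value on `dom r1`, else `r2`'s value. -/
def recUnion (r1 r2 : Rcd Name Data) : Rcd Name Data :=
  fun n => (r1 n).orElse (fun _ => r2 n)
/-- A labeled transition system. -/
structure LTS (Q A : Type) where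
  delta : Q → A → Set Q
  init : Set Q

variable {Q Q1 Q2 Q3 A : Type}

/-- The set of states reachable from a set of states by reading a finite string. -/
def reachSet (M : LTS Q A) : Set Q → List A → Set Q
  | S, [] => S
  | S, a :: w => reachSet M {q' | ∃ q ∈ S, q' ∈ M.delta q a} w

/-- A finite string is traceable in an LTS. -/
def finTraceable (M : LTS Q A) (w : List A) : Prop :=
  (reachSet M M.init w).Nonempty

/-- An infinite string is traceable in an LTS. -/
def infTraceable (M : LTS Q A) (w : ℕ → A) : Prop :=
  ∃ ρ : ℕ → Q, ρ 0 ∈ M.init ∧ ∀ i, ρ (i + 1) ∈ M.delta (ρ i) (w i)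

/-- A Büchi automaton. -/
structure BA (Q A : Type) where
  delta : Q → A → Set Q
  init : Set Q
  final : Set Q

def BA.toLTS (B : BA Q A) : LTS Q A := ⟨B.delta, B.init⟩

/-- The language of finite strings of a Büchi automaton regarded as an NFA. -/
def BA.Lf (B : BA Q A) (w : List A) : Prop :=
  (reachSet B.toLTS B.init w ∩ B.final).Nonempty

/-- The Büchi language of infinite strings. -/
def BA.LB (B : BA Q A) (w : ℕ → A) : Prop :=
  ∃ ρ : ℕ → Q, ρ 0 ∈ B.init ∧ (∀ i, ρ (i + 1) ∈ B.delta (ρ i) (w i)) ∧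
    ∀ n, ∃ m ≥ n, ρ m ∈ B.final

/-- An LTS of records (LTSR) over name set `N`: transitions only on records over `N`. -/
def ltsOver (M : LTS Q (Rcd Name Data)) (N : Set Name) : Prop :=
  ∀ q r, ¬ recDom r ⊆ N → M.delta q r = ∅

/-- A BAR over name set `N`: transitions only on records over `N`. -/
def baOver (B : BA Q (Rcd Name Data)) (N : Set Name) : Prop :=
  ∀ q r, ¬ recDom r ⊆ N → B.delta q r = ∅

/-- A trapless LTS: every state has an outgoing transition. -/
def trapless (M : LTS Q A) : Prop :=
  ∀ q, ∃ a, (M.delta q a).Nonempty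

/-- Pointwise restriction of a finite string of records to a name set. -/
noncomputable def strRestrict (w : List (Rcd Name Data)) (N : Set Name) :
    List (Rcd Name Data) :=
  w.map (fun r => recRestrict r N)

/-- The visible portion of a finite string: delete all invisible (empty-domain) records. -/
noncomputable def visList (w : List (Rcd Name Data)) : List (Rcd Name Data) :=
  w.filterMap (fun r => if (recDom r).Nonempty then some r else none)

/-- `vis(w↓_N)` for a finite string `w`. -/
noncomputable def visRestrict (w : List (Rcd Name Data)) (N : Set Name) :
    List (Rcd Name Data) :=
  visList (strRestrict w N)

/-- The transition function of the join: a record advances each component on its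
restriction to the component's name set when that restriction is visible, and
leaves the component unchanged otherwise. -/
noncomputable def joinDelta (N1 N2 : Set Name)
    (d1 : Q1 → Rcd Name Data → Set Q1) (d2 : Q2 → Rcd Name Data → Set Q2) :
    Q1 × Q2 → Rcd Name Data → Set (Q1 × Q2) :=
  fun p r =>
    {p' | p'.1 ∈ (if (recDom r ∩ N1).Nonempty then d1 p.1 (recRestrict r N1) else {p.1}) ∧
          p'.2 ∈ (if (recDom r ∩ N2).Nonempty then d2 p.2 (recRestrict r N2) else {p.2})}

/-- Join of two LTSRs. -/
noncomputable def joinLTS (N1 N2 : Set Name)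
    (M1 : LTS Q1 (Rcd Name Data)) (M2 : LTS Q2 (Rcd Name Data)) :
    LTS (Q1 × Q2) (Rcd Name Data) :=
  ⟨joinDelta N1 N2 M1.delta M2.delta, M1.init ×ˢ M2.init⟩

/-- The Büchi language of the join of two BARs: the generalized Büchi acceptance with
family `{F1 × Q2, Q1 × F2}`, i.e. both final-state sets occur infinitely often. -/
def joinLB (N1 N2 : Set Name)
    (B1 : BA Q1 (Rcd Name Data)) (B2 : BA Q2 (Rcd Name Data)) (w : ℕ → Rcd Name Data) : Prop :=
  ∃ ρ : ℕ → Q1 × Q2, ρ 0 ∈ B1.init ×ˢ B2.init ∧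
    (∀ i, ρ (i + 1) ∈ joinDelta N1 N2 B1.delta B2.delta (ρ i) (w i)) ∧
    (∀ n, ∃ m ≥ n, (ρ m).1 ∈ B1.final) ∧ (∀ n, ∃ m ≥ n, (ρ m).2 ∈ B2.final)

/-- The NFA language of the join of two BARs (final states `F1 × F2`). -/
noncomputable def joinLf (N1 N2 : Set Name)
    (B1 : BA Q1 (Rcd Name Data)) (B2 : BA Q2 (Rcd Name Data)) (w : List (Rcd Name Data)) : Prop :=
  (reachSet (joinLTS N1 N2 B1.toLTS B2.toLTS) (B1.init ×ˢ B2.init) w ∩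
      (B1.final ×ˢ B2.final)).Nonempty

/-- Path relation: `q'` is reachable from `q` reading `w`. -/
inductive Steps (M : LTS Q A) : Q → List A → Q → Prop
  | nil (q : Q) : Steps M q [] q
  | cons {q q' q'' a w} : q' ∈ M.delta q a → Steps M q' w q'' → Steps M q (a :: w) q''

lemma mem_reachSet_iff (M : LTS Q A) (w : List A) (S : Set Q) (q' : Q) :
    q' ∈ reachSet M S w ↔ ∃ q ∈ S, Steps M q w q' := by
  induction w generalizing S with
  | nil =>
    simp only [reachSet]
    constructor
    · intro h; exact ⟨q', h, Steps.nil q'⟩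
    · rintro ⟨q, hq, hs⟩; cases hs; exact hq
  | cons a w ih =>
    simp only [reachSet, ih]
    constructor
    · rintro ⟨p, ⟨q, hq, hp⟩, hs⟩; exact ⟨q, hq, Steps.cons hp hs⟩
    · rintro ⟨q, hq, hs⟩
      cases hs with
      | cons hp hs => exact ⟨_, ⟨q, hq, hp⟩, hs⟩

lemma finTraceable_iff_steps (M : LTS Q A) (w : List A) :
    finTraceable M w ↔ ∃ q ∈ M.init, ∃ q', Steps M q w q' := by
  constructor
  · rintro ⟨q', hq'⟩
    obtain ⟨q, hq, hs⟩ := (mem_reachSet_iff M w M.init q').1 hq'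
    exact ⟨q, hq, q', hs⟩
  · rintro ⟨q, hq, q', hs⟩
    exact ⟨q', (mem_reachSet_iff M w M.init q').2 ⟨q, hq, hs⟩⟩

lemma recDom_recRestrict (r : Rcd Name Data) (N : Set Name) :
    recDom (recRestrict r N) = recDom r ∩ N := by
  ext n
  simp only [recDom, recRestrict, Set.mem_setOf_eq, Set.mem_inter_iff]
  by_cases h : n ∈ N <;> simp [h]

lemma visRestrict_cons (r : Rcd Name Data) (w : List (Rcd Name Data)) (N : Set Name) :
    visRestrict (r :: w) N =
      if (recDom r ∩ N).Nonempty then recRestrict r N :: visRestrict w N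
      else visRestrict w N := by
  simp only [visRestrict, strRestrict, visList, List.map_cons, List.filterMap_cons,
    recDom_recRestrict]
  by_cases h : (recDom r ∩ N).Nonempty <;> simp [h]

lemma steps_join_iff {Q1 Q2 : Type} (N1 N2 : Set Name)
    (M1 : LTS Q1 (Rcd Name Data)) (M2 : LTS Q2 (Rcd Name Data))
    (w : List (Rcd Name Data)) (q1 : Q1) (q2 : Q2) (p : Q1 × Q2) :
    Steps (joinLTS N1 N2 M1 M2) (q1, q2) w p ↔
      Steps M1 q1 (visRestrict w N1) p.1 ∧ Steps M2 q2 (visRestrict w N2) p.2 := by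
  induction w generalizing q1 q2 with
  | nil =>
    simp only [visRestrict, strRestrict, visList, List.map_nil, List.filterMap_nil]
    constructor
    · intro h; cases h; exact ⟨Steps.nil _, Steps.nil _⟩
    · rintro ⟨h1, h2⟩
      cases h1; cases h2
      exact Steps.nil _
  | cons r w ih =>
    rw [visRestrict_cons, visRestrict_cons]
    constructor
    · intro h
      cases h with
      | cons hp hs =>
        rename_i q'
        obtain ⟨hA, hB⟩ := hp
        obtain ⟨hs1, hs2⟩ := (ih q'.1 q'.2).1 (by simpa using hs)
        constructor
        · by_cases hN1 : (recDom r ∩ N1).Nonempty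
          · simp only [hN1, if_true] at hA ⊢
            exact Steps.cons hA hs1
          · simp only [hN1, if_false] at hA ⊢
            cases hA; exact hs1
        · by_cases hN2 : (recDom r ∩ N2).Nonempty
          · simp only [hN2, if_true] at hB ⊢
            exact Steps.cons hB hs2
          · simp only [hN2, if_false] at hB ⊢
            cases hB; exact hs2
    · rintro ⟨hs1, hs2⟩
      by_cases hN1 : (recDom r ∩ N1).Nonempty <;>
        by_cases hN2 : (recDom r ∩ N2).Nonempty <;>
          simp only [hN1, hN2, if_true, if_false] at hs1 hs2
      · cases hs1 with
        | cons hp1 hs1' =>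
          cases hs2 with
          | cons hp2 hs2' =>
            rename_i q1' q2'
            refine Steps.cons (q' := (q1', q2')) ?_ ((ih q1' q2').2 ⟨hs1', hs2'⟩)
            exact ⟨by simp [joinLTS, joinDelta, hN1, hp1], by simp [joinLTS, joinDelta, hN2, hp2]⟩
      · cases hs1 with
        | cons hp1 hs1' =>
          rename_i q1'
          refine Steps.cons (q' := (q1', q2)) ?_ ((ih q1' q2).2 ⟨hs1', hs2⟩)
          exact ⟨by simp [joinLTS, joinDelta, hN1, hp1], by simp [joinLTS, joinDelta, hN2]⟩
      · cases hs2 with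
        | cons hp2 hs2' =>
          rename_i q2'
          refine Steps.cons (q' := (q1, q2')) ?_ ((ih q1 q2').2 ⟨hs1, hs2'⟩)
          exact ⟨by simp [joinLTS, joinDelta, hN1], by simp [joinLTS, joinDelta, hN2, hp2]⟩
      · refine Steps.cons (q' := (q1, q2)) ?_ ((ih q1 q2).2 ⟨hs1, hs2⟩)
        exact ⟨by simp [joinLTS, joinDelta, hN1], by simp [joinLTS, joinDelta, hN2]⟩

/-- language-theoretic characterization of join for finite traces: a finite
string `w ∈ Rec*_{N1∪N2}(D)` is traceable in `M1 ⋈ M2` iff `vis(w↓_{N1})` is traceable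
in `M1` and `vis(w↓_{N2})` is traceable in `M2`. -/
theorem join_finTraceable_iff {Q1 Q2 : Type} (N1 N2 : Set Name)
    (M1 : LTS Q1 (Rcd Name Data)) (M2 : LTS Q2 (Rcd Name Data))
    (h1 : ltsOver M1 N1) (h2 : ltsOver M2 N2)
    (w : List (Rcd Name Data)) (hw : ∀ r ∈ w, recDom r ⊆ N1 ∪ N2) :
    finTraceable (joinLTS N1 N2 M1 M2) w ↔
      finTraceable M1 (visRestrict w N1) ∧ finTraceable M2 (visRestrict w N2) := by
  simp only [finTraceable_iff_steps]
  constructor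
  · rintro ⟨⟨q1, q2⟩, hq, p, hs⟩
    obtain ⟨hs1, hs2⟩ := (steps_join_iff N1 N2 M1 M2 w q1 q2 p).1 hs
    obtain ⟨hq1, hq2⟩ := hq
    exact ⟨⟨q1, hq1, p.1, hs1⟩, ⟨q2, hq2, p.2, hs2⟩⟩
  · rintro ⟨⟨q1, hq1, p1, hs1⟩, ⟨q2, hq2, p2, hs2⟩⟩
    exact ⟨(q1, q2), ⟨hq1, hq2⟩, (p1, p2),
      (steps_join_iff N1 N2 M1 M2 w q1 q2 (p1, p2)).2 ⟨hs1, hs2⟩⟩
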